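/- Let σ be a symmetric trilinear form on ℝⁿ (n ≥ 4) with components σ_{ijk}, H^i := Σ_j σ_{jji}, and R̃_{ijkl} := Σ_m (σ_{ikm}σ_{jlm} - σ_{ilm}σ_{jkm}). Then for every orthonormal frame, Σ_{i=1}^2 Σ_{j=3}^4 R̃_{ijij} - 2R̃₁₂₃₄ ≥ η̃(n) Σ_k (H^k)² - (2/3) Σ_{i,j,k} σ_{ijk}², where η̃(4) = 1/2 and η̃(n) = 6/(3n+2) for n ≥ 5. -/
import Mathlib


open scoped RealInnerProductSpace

lemma certA37 (x000 x001 x002 x003 x011 x012 x013 x022 x023 x033 x111 x112 x113 x122 x123 x133 x222 x223 x233 x333 : ℝ) :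
    (3/7) * ((x000 + x011 + x022 + x033)^2 + (x001 + x111 + x122 + x133)^2 + (x002 + x112 + x222 + x233)^2 + (x003 + x113 + x223 + x333)^2)
    ≤ ((x000 + x011) * (x022 + x033) - (x002 + x013)^2 - (x003 - x012)^2) + ((x001 + x111) * (x122 + x133) - (x012 + x113)^2 - (x013 - x112)^2) + ((x002 + x112) * (x222 + x233) - (x022 + x123)^2 - (x023 - x122)^2) + ((x003 + x113) * (x223 + x333) - (x023 + x133)^2 - (x033 - x123)^2)
      + (2/3) * (x000^2 + 3 * x001^2 + 3 * x002^2 + 3 * x003^2 + 3 * x011^2 + 6 * x012^2 + 6 * x013^2 + 3 * x022^2 + 6 * x023^2 + 3 * x033^2 + x111^2 + 3 * x112^2 + 3 * x113^2 + 3 * x122^2 + 6 * x123^2 + 3 * x133^2 + x222^2 + 3 * x223^2 + 3 * x233^2 + x333^2) := by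
  have key : ((x000 + x011) * (x022 + x033) - (x002 + x013)^2 - (x003 - x012)^2) + ((x001 + x111) * (x122 + x133) - (x012 + x113)^2 - (x013 - x112)^2) + ((x002 + x112) * (x222 + x233) - (x022 + x123)^2 - (x023 - x122)^2) + ((x003 + x113) * (x223 + x333) - (x023 + x133)^2 - (x033 - x123)^2)
      + (2/3) * (x000^2 + 3 * x001^2 + 3 * x002^2 + 3 * x003^2 + 3 * x011^2 + 6 * x012^2 + 6 * x013^2 + 3 * x022^2 + 6 * x023^2 + 3 * x033^2 + x111^2 + 3 * x112^2 + 3 * x113^2 + 3 * x122^2 + 6 * x123^2 + 3 * x133^2 + x222^2 + 3 * x223^2 + 3 * x233^2 + x333^2)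
      - (3/7) * ((x000 + x011 + x022 + x033)^2 + (x001 + x111 + x122 + x133)^2 + (x002 + x112 + x222 + x233)^2 + (x003 + x113 + x223 + x333)^2)
      = (5/21) * (x000 - (9/5) * x011 + (3/10) * x022 + (3/10) * x033)^2 + (11/7) * (x001 - (3/11) * x111 + (1/22) * x122 + (1/22) * x133)^2 + (4/7) * (x002 - (7/4) * x013 - (3/4) * x112 + (1/8) * x222 + (1/8) * x233)^2 + (4/7) * (x003 + (7/4) * x012 - (3/4) * x113 + (1/8) * x223 + (1/8) * x333)^2 + (4/5) * (x011 + (1/4) * x022 + (1/4) * x033)^2 + (1/4) * (x012 - x113 - (1/2) * x223 - (1/2) * x333)^2 + (1/4) * (x013 + x112 + (1/2) * x222 + (1/2) * x233)^2 + (1/2) * (x022 - x033 - (2) * x123)^2 + (2) * (x023 + (1/2) * x122 - (1/2) * x133)^2 + (4/33) * (x111 + (3/4) * x122 + (3/4) * x133)^2 + (1/6) * (x222 - (3) * x233)^2 + (3/2) * (x223 - (1/3) * x333)^2 := by ring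
  have pos : (0:ℝ) ≤ (5/21) * (x000 - (9/5) * x011 + (3/10) * x022 + (3/10) * x033)^2 + (11/7) * (x001 - (3/11) * x111 + (1/22) * x122 + (1/22) * x133)^2 + (4/7) * (x002 - (7/4) * x013 - (3/4) * x112 + (1/8) * x222 + (1/8) * x233)^2 + (4/7) * (x003 + (7/4) * x012 - (3/4) * x113 + (1/8) * x223 + (1/8) * x333)^2 + (4/5) * (x011 + (1/4) * x022 + (1/4) * x033)^2 + (1/4) * (x012 - x113 - (1/2) * x223 - (1/2) * x333)^2 + (1/4) * (x013 + x112 + (1/2) * x222 + (1/2) * x233)^2 + (1/2) * (x022 - x033 - (2) * x123)^2 + (2) * (x023 + (1/2) * x122 - (1/2) * x133)^2 + (4/33) * (x111 + (3/4) * x122 + (3/4) * x133)^2 + (1/6) * (x222 - (3) * x233)^2 + (3/2) * (x223 - (1/3) * x333)^2 := by positivity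
  linarith [key, pos]

lemma certA12 (x000 x001 x002 x003 x011 x012 x013 x022 x023 x033 x111 x112 x113 x122 x123 x133 x222 x223 x233 x333 : ℝ) :
    (1/2) * ((x000 + x011 + x022 + x033)^2 + (x001 + x111 + x122 + x133)^2 + (x002 + x112 + x222 + x233)^2 + (x003 + x113 + x223 + x333)^2)
    ≤ ((x000 + x011) * (x022 + x033) - (x002 + x013)^2 - (x003 - x012)^2) + ((x001 + x111) * (x122 + x133) - (x012 + x113)^2 - (x013 - x112)^2) + ((x002 + x112) * (x222 + x233) - (x022 + x123)^2 - (x023 - x122)^2) + ((x003 + x113) * (x223 + x333) - (x023 + x133)^2 - (x033 - x123)^2)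
      + (2/3) * (x000^2 + 3 * x001^2 + 3 * x002^2 + 3 * x003^2 + 3 * x011^2 + 6 * x012^2 + 6 * x013^2 + 3 * x022^2 + 6 * x023^2 + 3 * x033^2 + x111^2 + 3 * x112^2 + 3 * x113^2 + 3 * x122^2 + 6 * x123^2 + 3 * x133^2 + x222^2 + 3 * x223^2 + 3 * x233^2 + x333^2) := by
  have key : ((x000 + x011) * (x022 + x033) - (x002 + x013)^2 - (x003 - x012)^2) + ((x001 + x111) * (x122 + x133) - (x012 + x113)^2 - (x013 - x112)^2) + ((x002 + x112) * (x222 + x233) - (x022 + x123)^2 - (x023 - x122)^2) + ((x003 + x113) * (x223 + x333) - (x023 + x133)^2 - (x033 - x123)^2)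
      + (2/3) * (x000^2 + 3 * x001^2 + 3 * x002^2 + 3 * x003^2 + 3 * x011^2 + 6 * x012^2 + 6 * x013^2 + 3 * x022^2 + 6 * x023^2 + 3 * x033^2 + x111^2 + 3 * x112^2 + 3 * x113^2 + 3 * x122^2 + 6 * x123^2 + 3 * x133^2 + x222^2 + 3 * x223^2 + 3 * x233^2 + x333^2)
      - (1/2) * ((x000 + x011 + x022 + x033)^2 + (x001 + x111 + x122 + x133)^2 + (x002 + x112 + x222 + x233)^2 + (x003 + x113 + x223 + x333)^2)
      = (1/6) * (x000 - (3) * x011)^2 + (3/2) * (x001 - (1/3) * x111)^2 + (1/2) * (x002 - (2) * x013 - x112)^2 + (1/2) * (x003 + (2) * x012 - x113)^2 + (1/2) * (x022 - x033 - (2) * x123)^2 + (2) * (x023 + (1/2) * x122 - (1/2) * x133)^2 + (1/6) * (x222 - (3) * x233)^2 + (3/2) * (x223 - (1/3) * x333)^2 := by ring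
  have pos : (0:ℝ) ≤ (1/6) * (x000 - (3) * x011)^2 + (3/2) * (x001 - (1/3) * x111)^2 + (1/2) * (x002 - (2) * x013 - x112)^2 + (1/2) * (x003 + (2) * x012 - x113)^2 + (1/2) * (x022 - x033 - (2) * x123)^2 + (2) * (x023 + (1/2) * x122 - (1/2) * x133)^2 + (1/6) * (x222 - (3) * x233)^2 + (3/2) * (x223 - (1/3) * x333)^2 := by positivity
  linarith [key, pos]


lemma certB (a b c d u p r s q v : ℝ) :
    (3/4) * (a + b + c + d)^2
    ≤ ((a + b) * (c + d) - (p + q)^2 - (r - s)^2)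
      + 2 * (a^2 + u^2 + p^2 + r^2 + (u^2 + b^2 + s^2 + q^2)
          + (p^2 + s^2 + c^2 + v^2) + (r^2 + q^2 + v^2 + d^2)) := by
  have key : ((a + b) * (c + d) - (p + q)^2 - (r - s)^2)
      + 2 * (a^2 + u^2 + p^2 + r^2 + (u^2 + b^2 + s^2 + q^2)
          + (p^2 + s^2 + c^2 + v^2) + (r^2 + q^2 + v^2 + d^2))
      - (3/4) * (a + b + c + d)^2
      = (a - b)^2 + (c - d)^2 + (1/4) * (a + b - c - d)^2 + (p - q)^2 + 2 * p^2 + 2 * q^2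
        + (r + s)^2 + 2 * r^2 + 2 * s^2 + 4 * u^2 + 4 * v^2 := by ring
  have pos : (0:ℝ) ≤ (a - b)^2 + (c - d)^2 + (1/4) * (a + b - c - d)^2 + (p - q)^2
      + 2 * p^2 + 2 * q^2 + (r + s)^2 + 2 * r^2 + 2 * s^2 + 4 * u^2 + 4 * v^2 := by positivity
  linarith [key, pos]


set_option maxHeartbeats 2000000 in
/-- Lemma 3.5: for a symmetric trilinear form `σ` on `ℝⁿ` (`n ≥ 4`),
`Σ_{i=1}^2 Σ_{j=3}^4 R̃_ijij - 2R̃₁₂₃₄ ≥ η̃(n) Σ (Hᵏ)² - (2/3) Σ σ_ijk²`,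
where `η̃(4) = 1/2` and `η̃(n) = 6/(3n+2)` for `n ≥ 5`. -/
theorem stmt_2 {n : ℕ} (hn : 4 ≤ n)
    (T : EuclideanSpace ℝ (Fin n) →ₗ[ℝ] EuclideanSpace ℝ (Fin n) →ₗ[ℝ]
      EuclideanSpace ℝ (Fin n) →ₗ[ℝ] ℝ)
    (hT1 : ∀ x y z, T x y z = T y x z)
    (hT2 : ∀ x y z, T x y z = T x z y)
    (e : Fin n → EuclideanSpace ℝ (Fin n)) (he : Orthonormal ℝ e) :
    let σ : Fin n → Fin n → Fin n → ℝ := fun i j k => T (e i) (e j) (e k)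
    let H : Fin n → ℝ := fun i => ∑ j, σ j j i
    let Rt : Fin n → Fin n → Fin n → Fin n → ℝ :=
      fun i j k l => ∑ m, (σ i k m * σ j l m - σ i l m * σ j k m)
    let i₁ : Fin n := ⟨0, by omega⟩
    let i₂ : Fin n := ⟨1, by omega⟩
    let i₃ : Fin n := ⟨2, by omega⟩
    let i₄ : Fin n := ⟨3, by omega⟩
    let η : ℝ := if n = 4 then 1 / 2 else 6 / (3 * (n : ℝ) + 2)
    η * ∑ k, (H k) ^ 2 - (2 / 3 : ℝ) * ∑ i, ∑ j, ∑ k, (σ i j k) ^ 2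
      ≤ (Rt i₁ i₃ i₁ i₃ + Rt i₁ i₄ i₁ i₄ + Rt i₂ i₃ i₂ i₃ + Rt i₂ i₄ i₂ i₄)
        - 2 * Rt i₁ i₂ i₃ i₄ := by
  intro σ H Rt i₁ i₂ i₃ i₄ η
  classical
  have hs1 : ∀ i j k, σ i j k = σ j i k := fun i j k => hT1 (e i) (e j) (e k)
  have hs2 : ∀ i j k, σ i j k = σ i k j := fun i j k => hT2 (e i) (e j) (e k)
  have p231 : ∀ i j k, σ i j k = σ j k i := fun i j k => (hs1 i j k).trans (hs2 j i k)
  have p312 : ∀ i j k, σ i j k = σ k i j := fun i j k => (p231 k i j).symm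
  have p321 : ∀ i j k, σ i j k = σ k j i := fun i j k => (p231 i j k).trans (hs1 j k i)
  have hH : ∀ k, H k = ∑ j, σ j j k := fun _ => rfl
  have hRt : ∀ i j k l, Rt i j k l = ∑ m, (σ i k m * σ j l m - σ i l m * σ j k m) :=
    fun _ _ _ _ => rfl
  have hηdef : η = if n = 4 then 1 / 2 else 6 / (3 * (n : ℝ) + 2) := rfl
  have hval1 : (i₁ : Fin n).val = 0 := rfl
  have hval2 : (i₂ : Fin n).val = 1 := rfl
  have hval3 : (i₃ : Fin n).val = 2 := rfl
  have hval4 : (i₄ : Fin n).val = 3 := rfl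
  have ne12 : i₁ ≠ i₂ := fun h => by rw [Fin.ext_iff, hval1, hval2] at h; norm_num at h
  have ne13 : i₁ ≠ i₃ := fun h => by rw [Fin.ext_iff, hval1, hval3] at h; norm_num at h
  have ne14 : i₁ ≠ i₄ := fun h => by rw [Fin.ext_iff, hval1, hval4] at h; norm_num at h
  have ne23 : i₂ ≠ i₃ := fun h => by rw [Fin.ext_iff, hval2, hval3] at h; norm_num at h
  have ne24 : i₂ ≠ i₄ := fun h => by rw [Fin.ext_iff, hval2, hval4] at h; norm_num at h
  have ne34 : i₃ ≠ i₄ := fun h => by rw [Fin.ext_iff, hval3, hval4] at h; norm_num at h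
  set L : Finset (Fin n) := {i₁, i₂, i₃, i₄} with hLdef
  set R : Finset (Fin n) := Lᶜ with hRdef
  have hm1 : i₁ ∉ ({i₂, i₃, i₄} : Finset (Fin n)) := by
    simp [Finset.mem_insert, ne12, ne13, ne14]
  have hm2 : i₂ ∉ ({i₃, i₄} : Finset (Fin n)) := by
    simp [Finset.mem_insert, ne23, ne24]
  have hm3 : i₃ ∉ ({i₄} : Finset (Fin n)) := by simp [ne34]
  have hLsum : ∀ g : Fin n → ℝ, ∑ x ∈ L, g x = g i₁ + g i₂ + g i₃ + g i₄ := by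
    intro g
    rw [hLdef, Finset.sum_insert hm1, Finset.sum_insert hm2, Finset.sum_insert hm3,
      Finset.sum_singleton]
    ring
  have hcardL : L.card = 4 := by
    rw [hLdef, Finset.card_insert_of_notMem hm1, Finset.card_insert_of_notMem hm2,
      Finset.card_insert_of_notMem hm3, Finset.card_singleton]
  have hcardRn : R.card = n - 4 := by
    rw [hRdef, Finset.card_compl, Fintype.card_fin, hcardL]
  have hcardR : ((R.card : ℕ) : ℝ) = (n : ℝ) - 4 := by
    rw [hcardRn, Nat.cast_sub hn]; norm_num
  have hsplit : ∀ g : Fin n → ℝ, (∑ x, g x) = (∑ x ∈ L, g x) + ∑ x ∈ R, g x :=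
    fun g => (Finset.sum_add_sum_compl L g).symm
  have pair_swap : ∀ g : Fin n → Fin n → ℝ,
      (∑ y ∈ R, ∑ x ∈ R.erase y, g x y) = ∑ x ∈ R, ∑ y ∈ R.erase x, g x y := by
    intro g
    refine Finset.sum_comm' ?_
    intro y x
    simp only [Finset.mem_erase]
    constructor
    · rintro ⟨hy, hxy, hx⟩; exact ⟨⟨fun h => hxy h.symm, hy⟩, hx⟩
    · rintro ⟨⟨hyx, hy⟩, hx⟩; exact ⟨hy, fun h => hyx h.symm, hx⟩
  obtain ⟨RTm, hRTm⟩ : ∃ F : Fin n → ℝ, ∀ m, F m =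
      (σ i₁ i₁ m + σ i₂ i₂ m) * (σ i₃ i₃ m + σ i₄ i₄ m)
        - (σ i₁ i₃ m + σ i₂ i₄ m) ^ 2 - (σ i₁ i₄ m - σ i₂ i₃ m) ^ 2 :=
    ⟨_, fun _ => rfl⟩
  obtain ⟨hh, hhh⟩ : ∃ F : Fin n → ℝ, ∀ k, F k =
      σ i₁ i₁ k + σ i₂ i₂ k + σ i₃ i₃ k + σ i₄ i₄ k := ⟨_, fun _ => rfl⟩
  have hRTsum : (Rt i₁ i₃ i₁ i₃ + Rt i₁ i₄ i₁ i₄ + Rt i₂ i₃ i₂ i₃ + Rt i₂ i₄ i₂ i₄)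
      - 2 * Rt i₁ i₂ i₃ i₄ = ∑ m, RTm m := by
    simp only [hRt, Finset.mul_sum, ← Finset.sum_add_distrib, ← Finset.sum_sub_distrib]
    refine Finset.sum_congr rfl fun m _ => ?_
    rw [hRTm, hs1 i₃ i₁ m, hs1 i₄ i₁ m, hs1 i₃ i₂ m, hs1 i₄ i₂ m]
    ring
  have hHsplit : ∀ k, H k = hh k + ∑ j ∈ R, σ j j k := by
    intro k
    rw [hH k, hsplit (fun j => σ j j k), hLsum (fun j => σ j j k), hhh k]
  -- splitting the full sum into 8 blocks
  have hsplit2 : ∀ F : Fin n → Fin n → ℝ, (∑ p, ∑ q, F p q)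
      = ((∑ p ∈ L, ∑ q ∈ L, F p q) + ∑ p ∈ L, ∑ q ∈ R, F p q)
        + ((∑ p ∈ R, ∑ q ∈ L, F p q) + ∑ p ∈ R, ∑ q ∈ R, F p q) := by
    intro F
    rw [hsplit (fun p => ∑ q, F p q)]
    congr 1
    · rw [← Finset.sum_add_distrib]
      exact Finset.sum_congr rfl fun p _ => hsplit _
    · rw [← Finset.sum_add_distrib]
      exact Finset.sum_congr rfl fun p _ => hsplit _
  have hsplit3 : (∑ i, ∑ j, ∑ k, σ i j k ^ 2)
      = ((((∑ a ∈ L, ∑ b ∈ L, ∑ c ∈ L, σ a b c ^ 2)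
          + ∑ a ∈ L, ∑ b ∈ L, ∑ c ∈ R, σ a b c ^ 2)
        + ((∑ a ∈ L, ∑ b ∈ R, ∑ c ∈ L, σ a b c ^ 2)
          + ∑ a ∈ L, ∑ b ∈ R, ∑ c ∈ R, σ a b c ^ 2))
        + (((∑ a ∈ R, ∑ b ∈ L, ∑ c ∈ L, σ a b c ^ 2)
          + ∑ a ∈ R, ∑ b ∈ L, ∑ c ∈ R, σ a b c ^ 2)
        + ((∑ a ∈ R, ∑ b ∈ R, ∑ c ∈ L, σ a b c ^ 2)
          + ∑ a ∈ R, ∑ b ∈ R, ∑ c ∈ R, σ a b c ^ 2))) := by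
    rw [hsplit (fun i => ∑ j, ∑ k, σ i j k ^ 2)]
    congr 1
    · rw [show (∑ a ∈ L, ∑ j, ∑ k, σ a j k ^ 2)
          = ∑ a ∈ L, (((∑ b ∈ L, ∑ c ∈ L, σ a b c ^ 2) + ∑ b ∈ L, ∑ c ∈ R, σ a b c ^ 2)
            + ((∑ b ∈ R, ∑ c ∈ L, σ a b c ^ 2) + ∑ b ∈ R, ∑ c ∈ R, σ a b c ^ 2)) from
        Finset.sum_congr rfl fun a _ => hsplit2 _]
      rw [Finset.sum_add_distrib, Finset.sum_add_distrib, Finset.sum_add_distrib]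
    · rw [show (∑ a ∈ R, ∑ j, ∑ k, σ a j k ^ 2)
          = ∑ a ∈ R, (((∑ b ∈ L, ∑ c ∈ L, σ a b c ^ 2) + ∑ b ∈ L, ∑ c ∈ R, σ a b c ^ 2)
            + ((∑ b ∈ R, ∑ c ∈ L, σ a b c ^ 2) + ∑ b ∈ R, ∑ c ∈ R, σ a b c ^ 2)) from
        Finset.sum_congr rfl fun a _ => hsplit2 _]
      rw [Finset.sum_add_distrib, Finset.sum_add_distrib, Finset.sum_add_distrib]
  -- block identities and bounds
  have hLLR : (∑ a ∈ L, ∑ b ∈ L, ∑ c ∈ R, σ a b c ^ 2)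
      = ∑ m ∈ R, ∑ a ∈ L, ∑ b ∈ L, σ a b m ^ 2 := by
    calc (∑ a ∈ L, ∑ b ∈ L, ∑ c ∈ R, σ a b c ^ 2)
        = ∑ a ∈ L, ∑ c ∈ R, ∑ b ∈ L, σ a b c ^ 2 :=
          Finset.sum_congr rfl fun a _ => Finset.sum_comm
      _ = ∑ c ∈ R, ∑ a ∈ L, ∑ b ∈ L, σ a b c ^ 2 := Finset.sum_comm
  have hLRL : (∑ a ∈ L, ∑ b ∈ R, ∑ c ∈ L, σ a b c ^ 2)
      = ∑ m ∈ R, ∑ a ∈ L, ∑ b ∈ L, σ a b m ^ 2 := by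
    calc (∑ a ∈ L, ∑ b ∈ R, ∑ c ∈ L, σ a b c ^ 2)
        = ∑ a ∈ L, ∑ b ∈ R, ∑ c ∈ L, σ a c b ^ 2 := by
          refine Finset.sum_congr rfl fun a _ => Finset.sum_congr rfl fun b _ =>
            Finset.sum_congr rfl fun c _ => ?_
          rw [hs2 a b c]
      _ = ∑ b ∈ R, ∑ a ∈ L, ∑ c ∈ L, σ a c b ^ 2 := Finset.sum_comm
  have hRLL : (∑ a ∈ R, ∑ b ∈ L, ∑ c ∈ L, σ a b c ^ 2)
      = ∑ m ∈ R, ∑ a ∈ L, ∑ b ∈ L, σ a b m ^ 2 := by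
    refine Finset.sum_congr rfl fun m _ => Finset.sum_congr rfl fun a _ =>
      Finset.sum_congr rfl fun b _ => ?_
    rw [p231 m a b]
  have hLRR : (∑ k ∈ L, ∑ j ∈ R, σ k j j ^ 2) ≤ ∑ a ∈ L, ∑ b ∈ R, ∑ c ∈ R, σ a b c ^ 2 :=
    Finset.sum_le_sum fun a _ => Finset.sum_le_sum fun j hj =>
      Finset.single_le_sum (f := fun c => σ a j c ^ 2) (fun c _ => sq_nonneg _) hj
  have hRLR : (∑ k ∈ L, ∑ j ∈ R, σ k j j ^ 2) ≤ ∑ a ∈ R, ∑ b ∈ L, ∑ c ∈ R, σ a b c ^ 2 := by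
    calc (∑ k ∈ L, ∑ j ∈ R, σ k j j ^ 2) = ∑ j ∈ R, ∑ k ∈ L, σ k j j ^ 2 := Finset.sum_comm
      _ ≤ ∑ a ∈ R, ∑ b ∈ L, ∑ c ∈ R, σ a b c ^ 2 := by
          refine Finset.sum_le_sum fun y hy => Finset.sum_le_sum fun a _ => ?_
          have h0 : σ y a y ^ 2 ≤ ∑ c ∈ R, σ y a c ^ 2 :=
            Finset.single_le_sum (f := fun c => σ y a c ^ 2) (fun c _ => sq_nonneg _) hy
          rwa [hs1 y a y] at h0
  have hRRL : (∑ k ∈ L, ∑ j ∈ R, σ k j j ^ 2) ≤ ∑ a ∈ R, ∑ b ∈ R, ∑ c ∈ L, σ a b c ^ 2 := by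
    calc (∑ k ∈ L, ∑ j ∈ R, σ k j j ^ 2) = ∑ j ∈ R, ∑ k ∈ L, σ k j j ^ 2 := Finset.sum_comm
      _ ≤ ∑ a ∈ R, ∑ b ∈ R, ∑ c ∈ L, σ a b c ^ 2 := by
          refine Finset.sum_le_sum fun y hy => ?_
          have h2 : (∑ c ∈ L, σ y y c ^ 2) ≤ ∑ b ∈ R, ∑ c ∈ L, σ y b c ^ 2 :=
            Finset.single_le_sum (f := fun b => ∑ c ∈ L, σ y b c ^ 2)
              (fun b _ => Finset.sum_nonneg fun c _ => sq_nonneg _) hy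
          refine le_trans (le_of_eq ?_) h2
          refine Finset.sum_congr rfl fun c _ => ?_
          rw [p231 c y y]
  have hRRR : (∑ m ∈ R, ∑ j ∈ R.erase m, σ m j j ^ 2)
      + (∑ m ∈ R, ∑ j ∈ R.erase m, σ m j j ^ 2)
      + (∑ m ∈ R, ∑ j ∈ R.erase m, σ m j j ^ 2)
      + (∑ m ∈ R, σ m m m ^ 2) ≤ ∑ a ∈ R, ∑ b ∈ R, ∑ c ∈ R, σ a b c ^ 2 := by
    have r1 : (∑ a ∈ R, ∑ b ∈ R, ∑ c ∈ R, σ a b c ^ 2)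
        = ∑ y ∈ R, ∑ z ∈ R, ∑ x ∈ R, σ x y z ^ 2 := by
      rw [Finset.sum_comm]
      exact Finset.sum_congr rfl fun y _ => Finset.sum_comm
    have key : ∀ y ∈ R, (σ y y y ^ 2 + ∑ x ∈ R.erase y, σ x y y ^ 2)
        + (∑ z ∈ R.erase y, (σ z y y ^ 2 + σ y z z ^ 2)) ≤ ∑ z ∈ R, ∑ x ∈ R, σ x y z ^ 2 := by
      intro y hy
      rw [← Finset.add_sum_erase R (fun z => ∑ x ∈ R, σ x y z ^ 2) hy]
      refine add_le_add (le_of_eq ?_) (Finset.sum_le_sum fun z hz => ?_)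
      · exact Finset.add_sum_erase R (fun x => σ x y y ^ 2) hy
      · obtain ⟨hzy, hzR⟩ := Finset.mem_erase.mp hz
        have hsub : ({y, z} : Finset (Fin n)) ⊆ R := by
          intro w hw
          rcases Finset.mem_insert.mp hw with h | h
          · rw [h]; exact hy
          · rw [Finset.mem_singleton.mp h]; exact hzR
        have hp : (∑ x ∈ ({y, z} : Finset (Fin n)), σ x y z ^ 2) ≤ ∑ x ∈ R, σ x y z ^ 2 :=
          Finset.sum_le_sum_of_subset_of_nonneg hsub fun x _ _ => sq_nonneg _
        rw [Finset.sum_pair (Ne.symm hzy)] at hp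
        rw [p231 z y y, show σ y z z = σ z y z from (hs1 z y z).symm]
        exact hp
    have hsum := Finset.sum_le_sum key
    rw [r1]
    refine le_trans (le_of_eq ?_) hsum
    rw [Finset.sum_add_distrib, Finset.sum_add_distrib,
      show (∑ y ∈ R, ∑ z ∈ R.erase y, (σ z y y ^ 2 + σ y z z ^ 2))
        = (∑ y ∈ R, ∑ z ∈ R.erase y, σ z y y ^ 2)
          + ∑ y ∈ R, ∑ z ∈ R.erase y, σ y z z ^ 2 from by
        rw [← Finset.sum_add_distrib]
        exact Finset.sum_congr rfl fun y _ => Finset.sum_add_distrib,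
      pair_swap (fun x y => σ x y y ^ 2)]
    ring
  have hBudget : (∑ a ∈ L, ∑ b ∈ L, ∑ c ∈ L, σ a b c ^ 2)
      + 3 * (∑ m ∈ R, ∑ a ∈ L, ∑ b ∈ L, σ a b m ^ 2)
      + 3 * (∑ k ∈ L, ∑ j ∈ R, σ k j j ^ 2)
      + 3 * (∑ m ∈ R, ∑ j ∈ R.erase m, σ m j j ^ 2)
      + (∑ m ∈ R, σ m m m ^ 2) ≤ ∑ i, ∑ j, ∑ k, σ i j k ^ 2 := by
    rw [hsplit3]
    linarith [hLLR, hLRL, hRLL, hLRR, hRLR, hRRL, hRRR]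
  have hHsum' : η * (∑ k, (H k) ^ 2)
      = η * (∑ k ∈ L, (H k) ^ 2) + η * (∑ k ∈ R, (H k) ^ 2) := by
    rw [hsplit (fun k => (H k) ^ 2)]; ring
  have hRTsplit : (∑ m, RTm m) = (∑ m ∈ L, RTm m) + ∑ m ∈ R, RTm m := hsplit _
  have hLRT : (∑ m ∈ L, RTm m) = RTm i₁ + RTm i₂ + RTm i₃ + RTm i₄ := hLsum _
  rcases eq_or_ne n 4 with h4 | h4
  · -- case n = 4
    have hη : η = 1 / 2 := by rw [hηdef, if_pos h4]
    have hR0 : R = ∅ := by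
      have hc : R.card = 0 := by rw [hcardRn, h4]
      exact Finset.card_eq_zero.mp hc
    have hHL : ∀ k, H k = hh k := fun k => by
      rw [hHsplit k, hR0, Finset.sum_empty, add_zero]
    have hL4 : (∑ k, (H k) ^ 2) = (hh i₁) ^ 2 + (hh i₂) ^ 2 + (hh i₃) ^ 2 + (hh i₄) ^ 2 := by
      rw [hsplit (fun k => (H k) ^ 2), hR0, Finset.sum_empty, add_zero,
        hLsum (fun k => (H k) ^ 2), hHL i₁, hHL i₂, hHL i₃, hHL i₄]
    have hRT4 : (∑ m, RTm m) = RTm i₁ + RTm i₂ + RTm i₃ + RTm i₄ := by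
      rw [hRTsplit, hR0, Finset.sum_empty, add_zero, hLRT]
    have w1 : (0:ℝ) ≤ ∑ m ∈ R, ∑ a ∈ L, ∑ b ∈ L, σ a b m ^ 2 :=
      Finset.sum_nonneg fun _ _ => Finset.sum_nonneg fun _ _ =>
        Finset.sum_nonneg fun _ _ => sq_nonneg _
    have w2 : (0:ℝ) ≤ ∑ k ∈ L, ∑ j ∈ R, σ k j j ^ 2 :=
      Finset.sum_nonneg fun _ _ => Finset.sum_nonneg fun _ _ => sq_nonneg _
    have w3 : (0:ℝ) ≤ ∑ m ∈ R, ∑ j ∈ R.erase m, σ m j j ^ 2 :=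
      Finset.sum_nonneg fun _ _ => Finset.sum_nonneg fun _ _ => sq_nonneg _
    have w4 : (0:ℝ) ≤ ∑ m ∈ R, σ m m m ^ 2 :=
      Finset.sum_nonneg fun _ _ => sq_nonneg _
    have hA : (1/2) * ((hh i₁) ^ 2 + (hh i₂) ^ 2 + (hh i₃) ^ 2 + (hh i₄) ^ 2)
        ≤ (RTm i₁ + RTm i₂ + RTm i₃ + RTm i₄)
          + (2/3) * ∑ a ∈ L, ∑ b ∈ L, ∑ c ∈ L, σ a b c ^ 2 := by
      simp only [hLsum, hhh, hRTm]
      simp only [show (σ i₁ i₂ i₁ : ℝ) = σ i₁ i₁ i₂ from hs2 i₁ i₂ i₁,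
        show (σ i₁ i₃ i₁ : ℝ) = σ i₁ i₁ i₃ from hs2 i₁ i₃ i₁,
        show (σ i₁ i₃ i₂ : ℝ) = σ i₁ i₂ i₃ from hs2 i₁ i₃ i₂,
        show (σ i₁ i₄ i₁ : ℝ) = σ i₁ i₁ i₄ from hs2 i₁ i₄ i₁,
        show (σ i₁ i₄ i₂ : ℝ) = σ i₁ i₂ i₄ from hs2 i₁ i₄ i₂,
        show (σ i₁ i₄ i₃ : ℝ) = σ i₁ i₃ i₄ from hs2 i₁ i₄ i₃,
        show (σ i₂ i₁ i₁ : ℝ) = σ i₁ i₁ i₂ from p231 i₂ i₁ i₁,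
        show (σ i₂ i₁ i₂ : ℝ) = σ i₁ i₂ i₂ from hs1 i₂ i₁ i₂,
        show (σ i₂ i₁ i₃ : ℝ) = σ i₁ i₂ i₃ from hs1 i₂ i₁ i₃,
        show (σ i₂ i₁ i₄ : ℝ) = σ i₁ i₂ i₄ from hs1 i₂ i₁ i₄,
        show (σ i₂ i₂ i₁ : ℝ) = σ i₁ i₂ i₂ from p312 i₂ i₂ i₁,
        show (σ i₂ i₃ i₁ : ℝ) = σ i₁ i₂ i₃ from p312 i₂ i₃ i₁,
        show (σ i₂ i₃ i₂ : ℝ) = σ i₂ i₂ i₃ from hs2 i₂ i₃ i₂,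
        show (σ i₂ i₄ i₁ : ℝ) = σ i₁ i₂ i₄ from p312 i₂ i₄ i₁,
        show (σ i₂ i₄ i₂ : ℝ) = σ i₂ i₂ i₄ from hs2 i₂ i₄ i₂,
        show (σ i₂ i₄ i₃ : ℝ) = σ i₂ i₃ i₄ from hs2 i₂ i₄ i₃,
        show (σ i₃ i₁ i₁ : ℝ) = σ i₁ i₁ i₃ from p231 i₃ i₁ i₁,
        show (σ i₃ i₁ i₂ : ℝ) = σ i₁ i₂ i₃ from p231 i₃ i₁ i₂,
        show (σ i₃ i₁ i₃ : ℝ) = σ i₁ i₃ i₃ from hs1 i₃ i₁ i₃,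
        show (σ i₃ i₁ i₄ : ℝ) = σ i₁ i₃ i₄ from hs1 i₃ i₁ i₄,
        show (σ i₃ i₂ i₁ : ℝ) = σ i₁ i₂ i₃ from p321 i₃ i₂ i₁,
        show (σ i₃ i₂ i₂ : ℝ) = σ i₂ i₂ i₃ from p231 i₃ i₂ i₂,
        show (σ i₃ i₂ i₃ : ℝ) = σ i₂ i₃ i₃ from hs1 i₃ i₂ i₃,
        show (σ i₃ i₂ i₄ : ℝ) = σ i₂ i₃ i₄ from hs1 i₃ i₂ i₄,
        show (σ i₃ i₃ i₁ : ℝ) = σ i₁ i₃ i₃ from p312 i₃ i₃ i₁,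
        show (σ i₃ i₃ i₂ : ℝ) = σ i₂ i₃ i₃ from p312 i₃ i₃ i₂,
        show (σ i₃ i₄ i₁ : ℝ) = σ i₁ i₃ i₄ from p312 i₃ i₄ i₁,
        show (σ i₃ i₄ i₂ : ℝ) = σ i₂ i₃ i₄ from p312 i₃ i₄ i₂,
        show (σ i₃ i₄ i₃ : ℝ) = σ i₃ i₃ i₄ from hs2 i₃ i₄ i₃,
        show (σ i₄ i₁ i₁ : ℝ) = σ i₁ i₁ i₄ from p231 i₄ i₁ i₁,
        show (σ i₄ i₁ i₂ : ℝ) = σ i₁ i₂ i₄ from p231 i₄ i₁ i₂,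
        show (σ i₄ i₁ i₃ : ℝ) = σ i₁ i₃ i₄ from p231 i₄ i₁ i₃,
        show (σ i₄ i₁ i₄ : ℝ) = σ i₁ i₄ i₄ from hs1 i₄ i₁ i₄,
        show (σ i₄ i₂ i₁ : ℝ) = σ i₁ i₂ i₄ from p321 i₄ i₂ i₁,
        show (σ i₄ i₂ i₂ : ℝ) = σ i₂ i₂ i₄ from p231 i₄ i₂ i₂,
        show (σ i₄ i₂ i₃ : ℝ) = σ i₂ i₃ i₄ from p231 i₄ i₂ i₃,
        show (σ i₄ i₂ i₄ : ℝ) = σ i₂ i₄ i₄ from hs1 i₄ i₂ i₄,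
        show (σ i₄ i₃ i₁ : ℝ) = σ i₁ i₃ i₄ from p321 i₄ i₃ i₁,
        show (σ i₄ i₃ i₂ : ℝ) = σ i₂ i₃ i₄ from p321 i₄ i₃ i₂,
        show (σ i₄ i₃ i₃ : ℝ) = σ i₃ i₃ i₄ from p231 i₄ i₃ i₃,
        show (σ i₄ i₃ i₄ : ℝ) = σ i₃ i₄ i₄ from hs1 i₄ i₃ i₄,
        show (σ i₄ i₄ i₁ : ℝ) = σ i₁ i₄ i₄ from p312 i₄ i₄ i₁,
        show (σ i₄ i₄ i₂ : ℝ) = σ i₂ i₄ i₄ from p312 i₄ i₄ i₂,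
        show (σ i₄ i₄ i₃ : ℝ) = σ i₃ i₄ i₄ from p312 i₄ i₄ i₃]
      linarith [certA12 (σ i₁ i₁ i₁) (σ i₁ i₁ i₂) (σ i₁ i₁ i₃) (σ i₁ i₁ i₄) (σ i₁ i₂ i₂) (σ i₁ i₂ i₃) (σ i₁ i₂ i₄) (σ i₁ i₃ i₃) (σ i₁ i₃ i₄) (σ i₁ i₄ i₄) (σ i₂ i₂ i₂) (σ i₂ i₂ i₃) (σ i₂ i₂ i₄) (σ i₂ i₃ i₃) (σ i₂ i₃ i₄) (σ i₂ i₄ i₄) (σ i₃ i₃ i₃) (σ i₃ i₃ i₄) (σ i₃ i₄ i₄) (σ i₄ i₄ i₄)]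
    rw [hη]
    linarith [hRTsum, hRT4, hL4, hA, hBudget, w1, w2, w3, w4]
  · -- case n ≥ 5
    have hn5 : 5 ≤ n := by omega
    have hη : η = 6 / (3 * (n : ℝ) + 2) := by rw [hηdef, if_neg h4]
    have hN5 : (5 : ℝ) ≤ (n : ℝ) := by exact_mod_cast hn5
    have d4 : (0:ℝ) < (n : ℝ) - 4 := by linarith
    have d3 : (0:ℝ) < 3 * (n : ℝ) + 2 := by linarith
    have hBform : ∀ m, (3/4) * (hh m) ^ 2
        ≤ RTm m + 2 * ∑ a ∈ L, ∑ b ∈ L, σ a b m ^ 2 := by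
      intro m
      simp only [hLsum, hhh, hRTm]
      rw [hs1 i₂ i₁ m, hs1 i₃ i₁ m, hs1 i₄ i₁ m, hs1 i₃ i₂ m, hs1 i₄ i₂ m, hs1 i₄ i₃ m]
      linarith [certB (σ i₁ i₁ m) (σ i₂ i₂ m) (σ i₃ i₃ m) (σ i₄ i₄ m) (σ i₁ i₂ m) (σ i₁ i₃ m) (σ i₁ i₄ m) (σ i₂ i₃ m) (σ i₂ i₄ m) (σ i₃ i₄ m)]
    have hcs1 : ∀ k, η * (H k) ^ 2 ≤ (3/7) * (hh k) ^ 2 + 2 * ∑ j ∈ R, σ k j j ^ 2 := by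
      intro k
      have ht : (∑ j ∈ R, σ j j k) = ∑ j ∈ R, σ k j j :=
        Finset.sum_congr rfl fun j _ => p312 j j k
      have hCS : (∑ j ∈ R, σ k j j) ^ 2 ≤ ((n : ℝ) - 4) * ∑ j ∈ R, σ k j j ^ 2 := by
        have h0 := sq_sum_le_card_mul_sum_sq (s := R) (f := fun j => σ k j j)
        rwa [hcardR] at h0
      have hdiv : (∑ j ∈ R, σ k j j) ^ 2 / ((n : ℝ) - 4) ≤ ∑ j ∈ R, σ k j j ^ 2 := by
        rw [div_le_iff₀ d4]; nlinarith [hCS]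
      rw [hη, hHsplit k, ht]
      have e1 : 3/7 * (hh k) ^ 2 + 2 * ((∑ j ∈ R, σ k j j) ^ 2 / ((n : ℝ) - 4))
          - 6 / (3 * (n : ℝ) + 2) * (hh k + ∑ j ∈ R, σ k j j) ^ 2
          = (3 * ((n : ℝ) - 4) * (hh k) - 14 * (∑ j ∈ R, σ k j j)) ^ 2
            / (7 * (3 * (n : ℝ) + 2) * ((n : ℝ) - 4)) := by
        field_simp
        ring
      have p1 : (0:ℝ) ≤ (3 * ((n : ℝ) - 4) * (hh k) - 14 * (∑ j ∈ R, σ k j j)) ^ 2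
          / (7 * (3 * (n : ℝ) + 2) * ((n : ℝ) - 4)) := by positivity
      linarith [e1, p1, hdiv]
    have hIV : η * (∑ k ∈ L, (H k) ^ 2)
        ≤ (3/7) * (∑ k ∈ L, (hh k) ^ 2) + 2 * ∑ k ∈ L, ∑ j ∈ R, σ k j j ^ 2 := by
      calc η * (∑ k ∈ L, (H k) ^ 2) = ∑ k ∈ L, η * (H k) ^ 2 := Finset.mul_sum _ _ _
        _ ≤ ∑ k ∈ L, ((3/7) * (hh k) ^ 2 + 2 * ∑ j ∈ R, σ k j j ^ 2) :=
            Finset.sum_le_sum fun k _ => hcs1 k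
        _ = (3/7) * (∑ k ∈ L, (hh k) ^ 2) + 2 * ∑ k ∈ L, ∑ j ∈ R, σ k j j ^ 2 := by
            rw [Finset.sum_add_distrib, ← Finset.mul_sum, ← Finset.mul_sum]
    have hcs2 : ∀ m ∈ R, η * (H m) ^ 2
        ≤ RTm m + 2 * (∑ a ∈ L, ∑ b ∈ L, σ a b m ^ 2)
          + (2 * (∑ j ∈ R.erase m, σ m j j ^ 2) + (2/3) * σ m m m ^ 2) := by
      intro m hm
      have hcast' : (((R.erase m).card : ℕ) : ℝ) = (n : ℝ) - 5 := by
        rw [Finset.card_erase_of_mem hm, hcardRn,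
          show n - 4 - 1 = n - 5 from by omega, Nat.cast_sub hn5]
        norm_num
      have hH' : H m = hh m + (σ m m m + ∑ j ∈ R.erase m, σ m j j) := by
        rw [hHsplit m]
        congr 1
        rw [← Finset.add_sum_erase R (fun j => σ j j m) hm]
        congr 1
        exact Finset.sum_congr rfl fun j _ => p312 j j m
      have hCS : (∑ j ∈ R.erase m, σ m j j) ^ 2
          ≤ ((n : ℝ) - 5) * ∑ j ∈ R.erase m, σ m j j ^ 2 := by
        have h0 := sq_sum_le_card_mul_sum_sq (s := R.erase m) (f := fun j => σ m j j)
        rwa [hcast'] at h0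
      have ha : (0:ℝ) ≤ ∑ j ∈ R.erase m, σ m j j ^ 2 :=
        Finset.sum_nonneg fun _ _ => sq_nonneg _
      have hB := hBform m
      rw [hη, hH']
      rcases Nat.lt_or_ge n 6 with h6 | h6
      · have hn5' : n = 5 := by omega
        have hNeq : (n : ℝ) = 5 := by rw [hn5']; norm_num
        have ht2 : (∑ j ∈ R.erase m, σ m j j) ^ 2 ≤ 0 := by
          rw [hNeq] at hCS; linarith [hCS]
        have ht0 : (∑ j ∈ R.erase m, σ m j j) = 0 := by
          nlinarith [ht2, sq_nonneg (∑ j ∈ R.erase m, σ m j j)]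
        rw [ht0, add_zero, hNeq]
        nlinarith [hB, ha, sq_nonneg (9 * hh m - 8 * σ m m m)]
      · have hN6 : (6 : ℝ) ≤ (n : ℝ) := by exact_mod_cast h6
        have d5 : (0:ℝ) < (n : ℝ) - 5 := by linarith
        have d2 : (0:ℝ) < (n : ℝ) - 2 := by linarith
        have hdiv : (∑ j ∈ R.erase m, σ m j j) ^ 2 / ((n : ℝ) - 5)
            ≤ ∑ j ∈ R.erase m, σ m j j ^ 2 := by
          rw [div_le_iff₀ d5]; nlinarith [hCS]
        have e1 : 2/3 * (σ m m m) ^ 2 + 2 * ((∑ j ∈ R.erase m, σ m j j) ^ 2 / ((n : ℝ) - 5))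
            - 2 / ((n : ℝ) - 2) * (σ m m m + ∑ j ∈ R.erase m, σ m j j) ^ 2
            = (((n : ℝ) - 5) * σ m m m - 3 * (∑ j ∈ R.erase m, σ m j j)) ^ 2
              * (2 / (3 * ((n : ℝ) - 2) * ((n : ℝ) - 5))) := by
          field_simp
          ring
        have e2 : 3/4 * (hh m) ^ 2
            + 2 / ((n : ℝ) - 2) * (σ m m m + ∑ j ∈ R.erase m, σ m j j) ^ 2
            - 6 / (3 * (n : ℝ) + 2)
              * (hh m + (σ m m m + ∑ j ∈ R.erase m, σ m j j)) ^ 2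
            = (3 * ((n : ℝ) - 2) * hh m
                - 8 * (σ m m m + ∑ j ∈ R.erase m, σ m j j)) ^ 2
              / (4 * ((n : ℝ) - 2) * (3 * (n : ℝ) + 2)) := by
          field_simp
          ring
        have p1 : (0:ℝ) ≤ (((n : ℝ) - 5) * σ m m m - 3 * (∑ j ∈ R.erase m, σ m j j)) ^ 2
            * (2 / (3 * ((n : ℝ) - 2) * ((n : ℝ) - 5))) := by positivity
        have p2 : (0:ℝ) ≤ (3 * ((n : ℝ) - 2) * hh m
            - 8 * (σ m m m + ∑ j ∈ R.erase m, σ m j j)) ^ 2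
            / (4 * ((n : ℝ) - 2) * (3 * (n : ℝ) + 2)) := by positivity
        linarith [hB, e1, e2, p1, p2, hdiv]
    have hV : η * (∑ m ∈ R, (H m) ^ 2)
        ≤ (∑ m ∈ R, RTm m) + 2 * (∑ m ∈ R, ∑ a ∈ L, ∑ b ∈ L, σ a b m ^ 2)
          + (2 * (∑ m ∈ R, ∑ j ∈ R.erase m, σ m j j ^ 2)
            + (2/3) * ∑ m ∈ R, σ m m m ^ 2) := by
      calc η * (∑ m ∈ R, (H m) ^ 2) = ∑ m ∈ R, η * (H m) ^ 2 := Finset.mul_sum _ _ _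
        _ ≤ ∑ m ∈ R, (RTm m + 2 * (∑ a ∈ L, ∑ b ∈ L, σ a b m ^ 2)
            + (2 * (∑ j ∈ R.erase m, σ m j j ^ 2) + (2/3) * σ m m m ^ 2)) :=
            Finset.sum_le_sum hcs2
        _ = _ := by
            rw [Finset.sum_add_distrib, Finset.sum_add_distrib, Finset.sum_add_distrib,
              ← Finset.mul_sum, ← Finset.mul_sum, ← Finset.mul_sum]
    have hA : (3/7) * (∑ k ∈ L, (hh k) ^ 2)
        ≤ (∑ m ∈ L, RTm m) + (2/3) * ∑ a ∈ L, ∑ b ∈ L, ∑ c ∈ L, σ a b c ^ 2 := by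
      simp only [hLsum, hhh, hRTm]
      simp only [show (σ i₁ i₂ i₁ : ℝ) = σ i₁ i₁ i₂ from hs2 i₁ i₂ i₁,
        show (σ i₁ i₃ i₁ : ℝ) = σ i₁ i₁ i₃ from hs2 i₁ i₃ i₁,
        show (σ i₁ i₃ i₂ : ℝ) = σ i₁ i₂ i₃ from hs2 i₁ i₃ i₂,
        show (σ i₁ i₄ i₁ : ℝ) = σ i₁ i₁ i₄ from hs2 i₁ i₄ i₁,
        show (σ i₁ i₄ i₂ : ℝ) = σ i₁ i₂ i₄ from hs2 i₁ i₄ i₂,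
        show (σ i₁ i₄ i₃ : ℝ) = σ i₁ i₃ i₄ from hs2 i₁ i₄ i₃,
        show (σ i₂ i₁ i₁ : ℝ) = σ i₁ i₁ i₂ from p231 i₂ i₁ i₁,
        show (σ i₂ i₁ i₂ : ℝ) = σ i₁ i₂ i₂ from hs1 i₂ i₁ i₂,
        show (σ i₂ i₁ i₃ : ℝ) = σ i₁ i₂ i₃ from hs1 i₂ i₁ i₃,
        show (σ i₂ i₁ i₄ : ℝ) = σ i₁ i₂ i₄ from hs1 i₂ i₁ i₄,
        show (σ i₂ i₂ i₁ : ℝ) = σ i₁ i₂ i₂ from p312 i₂ i₂ i₁,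
        show (σ i₂ i₃ i₁ : ℝ) = σ i₁ i₂ i₃ from p312 i₂ i₃ i₁,
        show (σ i₂ i₃ i₂ : ℝ) = σ i₂ i₂ i₃ from hs2 i₂ i₃ i₂,
        show (σ i₂ i₄ i₁ : ℝ) = σ i₁ i₂ i₄ from p312 i₂ i₄ i₁,
        show (σ i₂ i₄ i₂ : ℝ) = σ i₂ i₂ i₄ from hs2 i₂ i₄ i₂,
        show (σ i₂ i₄ i₃ : ℝ) = σ i₂ i₃ i₄ from hs2 i₂ i₄ i₃,
        show (σ i₃ i₁ i₁ : ℝ) = σ i₁ i₁ i₃ from p231 i₃ i₁ i₁,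
        show (σ i₃ i₁ i₂ : ℝ) = σ i₁ i₂ i₃ from p231 i₃ i₁ i₂,
        show (σ i₃ i₁ i₃ : ℝ) = σ i₁ i₃ i₃ from hs1 i₃ i₁ i₃,
        show (σ i₃ i₁ i₄ : ℝ) = σ i₁ i₃ i₄ from hs1 i₃ i₁ i₄,
        show (σ i₃ i₂ i₁ : ℝ) = σ i₁ i₂ i₃ from p321 i₃ i₂ i₁,
        show (σ i₃ i₂ i₂ : ℝ) = σ i₂ i₂ i₃ from p231 i₃ i₂ i₂,
        show (σ i₃ i₂ i₃ : ℝ) = σ i₂ i₃ i₃ from hs1 i₃ i₂ i₃,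
        show (σ i₃ i₂ i₄ : ℝ) = σ i₂ i₃ i₄ from hs1 i₃ i₂ i₄,
        show (σ i₃ i₃ i₁ : ℝ) = σ i₁ i₃ i₃ from p312 i₃ i₃ i₁,
        show (σ i₃ i₃ i₂ : ℝ) = σ i₂ i₃ i₃ from p312 i₃ i₃ i₂,
        show (σ i₃ i₄ i₁ : ℝ) = σ i₁ i₃ i₄ from p312 i₃ i₄ i₁,
        show (σ i₃ i₄ i₂ : ℝ) = σ i₂ i₃ i₄ from p312 i₃ i₄ i₂,
        show (σ i₃ i₄ i₃ : ℝ) = σ i₃ i₃ i₄ from hs2 i₃ i₄ i₃,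
        show (σ i₄ i₁ i₁ : ℝ) = σ i₁ i₁ i₄ from p231 i₄ i₁ i₁,
        show (σ i₄ i₁ i₂ : ℝ) = σ i₁ i₂ i₄ from p231 i₄ i₁ i₂,
        show (σ i₄ i₁ i₃ : ℝ) = σ i₁ i₃ i₄ from p231 i₄ i₁ i₃,
        show (σ i₄ i₁ i₄ : ℝ) = σ i₁ i₄ i₄ from hs1 i₄ i₁ i₄,
        show (σ i₄ i₂ i₁ : ℝ) = σ i₁ i₂ i₄ from p321 i₄ i₂ i₁,
        show (σ i₄ i₂ i₂ : ℝ) = σ i₂ i₂ i₄ from p231 i₄ i₂ i₂,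
        show (σ i₄ i₂ i₃ : ℝ) = σ i₂ i₃ i₄ from p231 i₄ i₂ i₃,
        show (σ i₄ i₂ i₄ : ℝ) = σ i₂ i₄ i₄ from hs1 i₄ i₂ i₄,
        show (σ i₄ i₃ i₁ : ℝ) = σ i₁ i₃ i₄ from p321 i₄ i₃ i₁,
        show (σ i₄ i₃ i₂ : ℝ) = σ i₂ i₃ i₄ from p321 i₄ i₃ i₂,
        show (σ i₄ i₃ i₃ : ℝ) = σ i₃ i₃ i₄ from p231 i₄ i₃ i₃,
        show (σ i₄ i₃ i₄ : ℝ) = σ i₃ i₄ i₄ from hs1 i₄ i₃ i₄,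
        show (σ i₄ i₄ i₁ : ℝ) = σ i₁ i₄ i₄ from p312 i₄ i₄ i₁,
        show (σ i₄ i₄ i₂ : ℝ) = σ i₂ i₄ i₄ from p312 i₄ i₄ i₂,
        show (σ i₄ i₄ i₃ : ℝ) = σ i₃ i₄ i₄ from p312 i₄ i₄ i₃]
      linarith [certA37 (σ i₁ i₁ i₁) (σ i₁ i₁ i₂) (σ i₁ i₁ i₃) (σ i₁ i₁ i₄) (σ i₁ i₂ i₂) (σ i₁ i₂ i₃) (σ i₁ i₂ i₄) (σ i₁ i₃ i₃) (σ i₁ i₃ i₄) (σ i₁ i₄ i₄) (σ i₂ i₂ i₂) (σ i₂ i₂ i₃) (σ i₂ i₂ i₄) (σ i₂ i₃ i₃) (σ i₂ i₃ i₄) (σ i₂ i₄ i₄) (σ i₃ i₃ i₃) (σ i₃ i₃ i₄) (σ i₃ i₄ i₄) (σ i₄ i₄ i₄)]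
    linarith [hRTsum, hRTsplit, hHsum', hIV, hV, hA, hBudget]
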